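/- arXiv:1611.04279 — 5 statements merged into one kernel-verified Lean document; each statement's English description precedes it below -/
import Mathlib

section
/- Let G be a graph, u ∈ V(G), and i ≥ 1 an integer. Let x, y be two distinct vertices in N_i(u) (vertices at distance exactly i from u). Then there exists an induced path P in G from x to y such that V(P) ⊆ {u} ∪ N_1(u) ∪ ... ∪ N_i(u) and |V(P) ∩ N_j(u)| ≤ 2 for every j ∈ {1, ..., i}. -/
open SimpleGraph

/-- A witness that the graph `H` is (exactly) a subdivision of `K₄`: four distinct branch
vertices joined by six internally disjoint paths of length at least one, covering all
vertices and edges of `H`. -/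
structure K4Subdivision {W : Type*} (H : SimpleGraph W) : Type _ where
  b : Fin 4 → W
  inj : Function.Injective b
  p : ∀ i j : Fin 4, i < j → H.Walk (b i) (b j)
  isPath : ∀ (i j : Fin 4) (h : i < j), (p i j h).IsPath
  len : ∀ (i j : Fin 4) (h : i < j), 1 ≤ (p i j h).length
  disj : ∀ (i j : Fin 4) (h : i < j), ∀ (k l : Fin 4) (h' : k < l), (i, j) ≠ (k, l) → ∀ v,
      v ∈ (p i j h).support → v ∈ (p k l h').support → v = b i ∨ v = b j
  coverV : ∀ v, ∃ (i j : Fin 4) (h : i < j), v ∈ (p i j h).support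
  coverE : ∀ e ∈ H.edgeSet, ∃ (i j : Fin 4) (h : i < j), e ∈ (p i j h).edges

/-- A graph is ISK4-free if no induced subgraph is a subdivision of `K₄`. -/
def ISK4Free {V : Type*} (G : SimpleGraph V) : Prop :=
  ∀ s : Set V, IsEmpty (K4Subdivision (G.induce s))

/-- `G` has no induced `K_{3,3}`. -/
def K33Free {V : Type*} (G : SimpleGraph V) : Prop :=
  IsEmpty (completeBipartiteGraph (Fin 3) (Fin 3) ↪g G)

/-- `G` has no induced `K_{2,2,2}` (octahedron). -/
def K222Free {V : Type*} (G : SimpleGraph V) : Prop :=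
  IsEmpty (completeMultipartiteGraph (fun _ : Fin 3 => Fin 2) ↪g G)

/-- A witness that `H` is (exactly) a prism: three vertex-disjoint paths of length at least
one whose ends form two triangles, with no other edges. -/
structure PrismStruct {W : Type*} (H : SimpleGraph W) : Type _ where
  a : Fin 3 → W
  b : Fin 3 → W
  p : ∀ i, H.Walk (a i) (b i)
  isPath : ∀ i, (p i).IsPath
  len : ∀ i, 1 ≤ (p i).length
  triA : ∀ i j, i ≠ j → H.Adj (a i) (a j)
  triB : ∀ i j, i ≠ j → H.Adj (b i) (b j)
  disj : ∀ i j, i ≠ j → ∀ v, v ∈ (p i).support → v ∉ (p j).support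
  coverV : ∀ v, ∃ i, v ∈ (p i).support
  coverE : ∀ e ∈ H.edgeSet, (∃ i, e ∈ (p i).edges) ∨
      (∃ i j, i ≠ j ∧ e = s(a i, a j)) ∨ (∃ i j, i ≠ j ∧ e = s(b i, b j))

/-- `G` has no induced prism. -/
def PrismFree {V : Type*} (G : SimpleGraph V) : Prop :=
  ∀ s : Set V, IsEmpty (PrismStruct (G.induce s))

/-- `C` is the vertex set of a hole (an induced cycle on at least four vertices) of `G`. -/
def IsHole {V : Type*} (G : SimpleGraph V) (C : Set V) : Prop :=
  ∃ (v : V) (w : G.Walk v v), w.IsCycle ∧ 4 ≤ w.length ∧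
    (∀ x, x ∈ C ↔ x ∈ w.support) ∧
    (∀ x ∈ C, ∀ y ∈ C, G.Adj x y → s(x, y) ∈ w.edges)

/-- `G` contains no induced boat: no hole together with a vertex having exactly four
consecutive neighbours on the hole. -/
def BoatFree {V : Type*} (G : SimpleGraph V) : Prop :=
  ¬ ∃ (C : Set V) (v v₀ x₁ x₂ x₃ x₄ : V) (w : G.Walk v₀ v₀),
      w.IsCycle ∧ 4 ≤ w.length ∧ (∀ x, x ∈ C ↔ x ∈ w.support) ∧
      (∀ x ∈ C, ∀ y ∈ C, G.Adj x y → s(x, y) ∈ w.edges) ∧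
      v ∉ C ∧ [x₁, x₂, x₃, x₄].Nodup ∧
      s(x₁, x₂) ∈ w.edges ∧ s(x₂, x₃) ∈ w.edges ∧ s(x₃, x₄) ∈ w.edges ∧
      {x ∈ C | G.Adj v x} = {x₁, x₂, x₃, x₄}

/-- `G` contains no induced 4-wheel: no induced four-cycle together with a vertex adjacent
to all four of its vertices. -/
def FourWheelFree {V : Type*} (G : SimpleGraph V) : Prop :=
  ¬ ∃ v a b c d : V, a ≠ b ∧ a ≠ c ∧ a ≠ d ∧ b ≠ c ∧ b ≠ d ∧ c ≠ d ∧
      G.Adj a b ∧ G.Adj b c ∧ G.Adj c d ∧ G.Adj d a ∧ ¬ G.Adj a c ∧ ¬ G.Adj b d ∧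
      G.Adj v a ∧ G.Adj v b ∧ G.Adj v c ∧ G.Adj v d

/-- The subgraph of `G` induced on `T` is a confluence of `{x, y, z}`. -/
def IsConfluence {V : Type*} (G : SimpleGraph V) (T : Set V) (x y z : V) : Prop :=
  (∃ (c : V) (px : G.Walk c x) (py : G.Walk c y) (pz : G.Walk c z),
    px.IsPath ∧ py.IsPath ∧ pz.IsPath ∧
    (∀ v, v ∈ px.support → v ∈ py.support → v = c) ∧
    (∀ v, v ∈ px.support → v ∈ pz.support → v = c) ∧
    (∀ v, v ∈ py.support → v ∈ pz.support → v = c) ∧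
    (∀ v, v ∈ T ↔ (v ∈ px.support ∨ v ∈ py.support ∨ v ∈ pz.support)) ∧
    (∀ a ∈ T, ∀ b ∈ T, G.Adj a b →
      s(a, b) ∈ px.edges ∨ s(a, b) ∈ py.edges ∨ s(a, b) ∈ pz.edges))
  ∨
  (∃ (x' y' z' : V) (px : G.Walk x' x) (py : G.Walk y' y) (pz : G.Walk z' z),
    px.IsPath ∧ py.IsPath ∧ pz.IsPath ∧
    G.Adj x' y' ∧ G.Adj y' z' ∧ G.Adj x' z' ∧
    (∀ v, v ∈ px.support → v ∉ py.support) ∧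
    (∀ v, v ∈ px.support → v ∉ pz.support) ∧
    (∀ v, v ∈ py.support → v ∉ pz.support) ∧
    (∀ v, v ∈ T ↔ (v ∈ px.support ∨ v ∈ py.support ∨ v ∈ pz.support)) ∧
    (∀ a ∈ T, ∀ b ∈ T, G.Adj a b →
      s(a, b) ∈ px.edges ∨ s(a, b) ∈ py.edges ∨ s(a, b) ∈ pz.edges ∨
      s(a, b) = s(x', y') ∨ s(a, b) = s(y', z') ∨ s(a, b) = s(x', z')))


private lemma getVert_takeUntil_length {V : Type*} [DecidableEq V] {G : SimpleGraph V} {u v a : V}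
    (p : G.Walk u v) (h : a ∈ p.support) :
    p.getVert ((p.takeUntil a h).length) = a := by
  nth_rewrite 1 [← p.take_spec h]
  rw [Walk.getVert_append]
  simp

private lemma edge_getVert_mem {V : Type*} {G : SimpleGraph V} {u v : V} (p : G.Walk u v) :
    ∀ i, i < p.length → s(p.getVert i, p.getVert (i+1)) ∈ p.edges := by
  induction p with
  | nil => simp
  | @cons a b c h q ih =>
    intro i hi
    cases i with
    | zero =>
      simp [Walk.getVert_zero, Walk.getVert_cons_succ, Walk.edges_cons]
    | succ n =>
      simp only [Walk.getVert_cons_succ, Walk.edges_cons, List.mem_cons]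
      right
      exact ih n (by simpa [Nat.succ_lt_succ_iff] using hi)

private lemma dist_eq_length_takeUntil {V : Type*} [DecidableEq V] {G : SimpleGraph V} {u x v : V}
    (p : G.Walk u x) (hp : p.length = G.dist u x) (h : v ∈ p.support) :
    G.dist u v = (p.takeUntil v h).length := by
  have hle : G.dist u v ≤ (p.takeUntil v h).length := SimpleGraph.dist_le _
  obtain ⟨s, hs⟩ := (p.takeUntil v h).reachable.exists_walk_length_eq_dist
  have h2 : G.dist u x ≤ (s.append (p.dropUntil v h)).length := SimpleGraph.dist_le _
  have h3 := congrArg Walk.length (p.take_spec h)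
  rw [Walk.length_append] at h3
  rw [Walk.length_append, hs] at h2
  omega

/-- Upstairs path: any two distinct vertices at distance exactly `i ≥ 1` from `u` are joined
by an induced path staying within `{u} ∪ N₁(u) ∪ ⋯ ∪ Nᵢ(u)` and meeting each layer
`Nⱼ(u)` (`1 ≤ j ≤ i`) in at most two vertices. -/
theorem exists_upstairs_path {V : Type*} (G : SimpleGraph V) (u : V) (i : ℕ) (hi : 1 ≤ i)
    (x y : V) (hx : G.dist u x = i) (hx' : G.Reachable u x) (hy : G.dist u y = i)
    (hy' : G.Reachable u y) (hxy : x ≠ y) :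
    ∃ w : G.Walk x y, w.IsPath ∧
      (∀ a ∈ w.support, ∀ b ∈ w.support, G.Adj a b → s(a, b) ∈ w.edges) ∧
      (∀ v ∈ w.support, G.Reachable u v ∧ G.dist u v ≤ i) ∧
      (∀ j : ℕ, 1 ≤ j → j ≤ i →
        Set.ncard {v | v ∈ w.support ∧ G.dist u v = j} ≤ 2) := by
  classical
  obtain ⟨P, hPl⟩ := hx'.exists_walk_length_eq_dist
  obtain ⟨Q, hQl⟩ := hy'.exists_walk_length_eq_dist
  set S : V → Prop := fun v => v ∈ P.support ∨ v ∈ Q.support with hS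
  -- the set of lengths of walks from x to y supported in S
  set L : Set ℕ := {n | ∃ q : G.Walk x y, (∀ v ∈ q.support, S v) ∧ q.length = n} with hL
  have hLne : (P.reverse.append Q).length ∈ L := by
    refine ⟨P.reverse.append Q, ?_, rfl⟩
    intro v hv
    rw [Walk.mem_support_append_iff, Walk.support_reverse, List.mem_reverse] at hv
    exact hv
  obtain ⟨p, hpS, hplen⟩ : ∃ q : G.Walk x y, (∀ v ∈ q.support, S v) ∧ q.length = sInf L :=
    Nat.sInf_mem ⟨_, hLne⟩
  have hmin : ∀ q : G.Walk x y, (∀ v ∈ q.support, S v) → p.length ≤ q.length := by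
    intro q hq
    rw [hplen]
    exact Nat.sInf_le ⟨q, hq, rfl⟩
  have hpath : p.IsPath := by
    have hb : p.length ≤ p.bypass.length :=
      hmin p.bypass fun v hv => hpS v (p.support_bypass_subset hv)
    have := p.bypass_eq_self_of_length_le hb
    rw [← this]
    exact p.bypass_isPath
  -- inducedness
  have key : ∀ a b (ha : a ∈ p.support) (hb : b ∈ p.support), G.Adj a b →
      (p.takeUntil a ha).length ≤ (p.takeUntil b hb).length → s(a, b) ∈ p.edges := by
    intro a b ha hb hab hle
    set ta := (p.takeUntil a ha).length with hta
    set tb := (p.takeUntil b hb).length with htb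
    have hga : p.getVert ta = a := getVert_takeUntil_length p ha
    have hgb : p.getVert tb = b := getVert_takeUntil_length p hb
    have hsplit := congrArg Walk.length (p.take_spec hb)
    rw [Walk.length_append] at hsplit
    have hwS : ∀ v ∈ ((p.takeUntil a ha).append (Walk.cons hab (p.dropUntil b hb))).support,
        S v := by
      intro v hv
      rw [Walk.mem_support_append_iff] at hv
      rcases hv with hv | hv
      · exact hpS v (p.support_takeUntil_subset ha hv)
      · rw [Walk.support_cons, List.mem_cons] at hv
        rcases hv with rfl | hv
        · exact hpS v ha
        · exact hpS v (p.support_dropUntil_subset hb hv)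
    have hlen := hmin _ hwS
    rw [Walk.length_append, Walk.length_cons] at hlen
    -- p.length ≤ ta + ((dropUntil b).length + 1) and p.length = tb + (dropUntil b).length
    have hcase : tb = ta ∨ tb = ta + 1 := by omega
    rcases hcase with hcase | hcase
    · exact absurd (by rw [← hga, ← hgb, hcase]) hab.ne
    · have hlt : ta < p.length := by
        have := p.length_takeUntil_le hb
        omega
      have := edge_getVert_mem p ta hlt
      rw [hga, ← hcase, hgb] at this
      exact this
  have hinduced : ∀ a ∈ p.support, ∀ b ∈ p.support, G.Adj a b → s(a, b) ∈ p.edges := by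
    intro a ha b hb hab
    rcases le_total (p.takeUntil a ha).length (p.takeUntil b hb).length with h | h
    · exact key a b ha hb hab h
    · rw [Sym2.eq_swap]
      exact key b a hb ha hab.symm h
  -- distance facts for vertices in S
  have hdistP : ∀ v (h : v ∈ P.support), G.Reachable u v ∧ G.dist u v ≤ i ∧
      P.getVert (G.dist u v) = v := by
    intro v h
    have hd := dist_eq_length_takeUntil P hPl h
    refine ⟨(P.takeUntil v h).reachable, ?_, ?_⟩
    · rw [hd]
      calc (P.takeUntil v h).length ≤ P.length := P.length_takeUntil_le h
        _ = i := by rw [hPl, hx]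
    · rw [hd]; exact getVert_takeUntil_length P h
  have hdistQ : ∀ v (h : v ∈ Q.support), G.Reachable u v ∧ G.dist u v ≤ i ∧
      Q.getVert (G.dist u v) = v := by
    intro v h
    have hd := dist_eq_length_takeUntil Q hQl h
    refine ⟨(Q.takeUntil v h).reachable, ?_, ?_⟩
    · rw [hd]
      calc (Q.takeUntil v h).length ≤ Q.length := Q.length_takeUntil_le h
        _ = i := by rw [hQl, hy]
    · rw [hd]; exact getVert_takeUntil_length Q h
  refine ⟨p, hpath, hinduced, ?_, ?_⟩
  · intro v hv
    rcases hpS v hv with h | h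
    · exact ⟨(hdistP v h).1, (hdistP v h).2.1⟩
    · exact ⟨(hdistQ v h).1, (hdistQ v h).2.1⟩
  · intro j hj1 hj2
    have hsub : {v | v ∈ p.support ∧ G.dist u v = j} ⊆ {P.getVert j, Q.getVert j} := by
      rintro v ⟨hv, hd⟩
      rcases hpS v hv with h | h
      · left
        rw [← hd]
        exact ((hdistP v h).2.2).symm
      · right
        rw [← hd]
        exact ((hdistQ v h).2.2).symm
    calc Set.ncard {v | v ∈ p.support ∧ G.dist u v = j}
        ≤ Set.ncard {P.getVert j, Q.getVert j} :=
          Set.ncard_le_ncard hsub (Set.toFinite _)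
      _ ≤ 2 := (Set.ncard_insert_le _ _).trans (by simp)
end

section
/- Let G be a graph, u ∈ V(G), and i ≥ 1 an integer. Let x, y, z be three distinct vertices in N_i(u). Then there exists a set S ⊆ {u} ∪ N_1(u) ∪ ... ∪ N_{i−1}(u) such that the subgraph of G induced by S ∪ {x, y, z} is a confluence of {x, y, z}. -/
/-!
Let `Q` be a shortest `y`–`z` path; it is induced. If `x` lies on `Q`, then `Q` itself is a
confluence centred at `x`. If `x` is adjacent to `Q`, look at its neighbours on `Q`. Two
non-adjacent ones are at distance two along `Q`, so replacing the vertex between them by `x` gives a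
shortest `y`–`z` path through `x`. Otherwise the neighbours are pairwise adjacent, and since a
shortest path contains no triangle they are either the two ends of an edge of `Q` (a confluence of
the second type) or a single vertex `q` (the confluence `Q` centred at `q`, extended by `qx`).
A vertex `x` at distance `n + 1 ≥ 2` from `Q` has a neighbour `x₁` at distance `n`; all vertices
but `x₁` of the confluence for `x₁` are closer than `n` to `Q`, so `x` sees only `x₁` and can be
appended.

The theorem follows by working in the subgraph induced by the ball of radius `i - 1` around `u`
together with `x`, `y`, `z`, which shortest paths from `u` keep connected.
-/

open SimpleGraph

namespace SimpleGraph

namespace Walk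

variable {V W : Type*} {G : SimpleGraph V} {G' : SimpleGraph W} {u v w a b c d x y z : V}

lemma exists_isSubwalk_of_mem_support {p : G.Walk u v} (ha : a ∈ p.support)
    (hb : b ∈ p.support) : ∃ q : G.Walk a b, q.IsSubwalk p ∨ q.reverse.IsSubwalk p := by
  obtain ⟨A, B, rfl⟩ := mem_support_iff_exists_append.1 ha
  rcases (mem_support_append_iff _ _).1 hb with hbA | hbB
  · obtain ⟨C, D, rfl⟩ := mem_support_iff_exists_append.1 hbA
    exact ⟨D.reverse, .inr (by rw [reverse_reverse]; exact ⟨C, B, rfl⟩)⟩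
  · obtain ⟨C, D, rfl⟩ := mem_support_iff_exists_append.1 hbB
    exact ⟨C, .inl ⟨A, D, append_assoc _ _ _⟩⟩

lemma mem_edges_of_length_eq_one {q : G.Walk a b} (hq : q.length = 1) : s(a, b) ∈ q.edges := by
  cases q with
  | nil => simp at hq
  | cons h q' =>
    cases q' with
    | nil => simp
    | cons => simp at hq

lemma isChordless_of_length_eq_dist {p : G.Walk u v} (hp : p.length = G.dist u v) :
    p.IsChordless := by
  refine isChordless_iff_forall_mem_edges.2 fun a b ha hb hab => ?_
  obtain ⟨q, hq | hq⟩ := exists_isSubwalk_of_mem_support ha hb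
  · have hq1 : q.length = 1 := by
      rw [length_eq_dist_of_subwalk hp hq, dist_eq_one_iff_adj.2 hab]
    exact hq.edges_subset (mem_edges_of_length_eq_one hq1)
  · have hq1 : q.reverse.length = 1 := by
      rw [length_eq_dist_of_subwalk hp hq, dist_eq_one_iff_adj.2 hab.symm]
    have := hq.edges_subset (mem_edges_of_length_eq_one hq1)
    rwa [Sym2.eq_swap]

lemma eq_of_dist_eq_of_length_eq_dist {p : G.Walk u v} (hp : p.length = G.dist u v)
    (ha : a ∈ p.support) (hb : b ∈ p.support) (hab : G.dist u a = G.dist u b) : a = b := by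
  classical
  have hlen : ∀ (c) (hc : c ∈ p.support), (p.takeUntil c hc).length = G.dist u c := fun c hc =>
    length_eq_dist_of_subwalk hp (p.isSubwalk_takeUntil hc)
  rw [← getVert_length_takeUntil ha, ← getVert_length_takeUntil hb, hlen, hlen, hab]

lemma IsPath.eq_of_mem_support_append {p : G.Walk u v} {q : G.Walk v w}
    (hpq : (p.append q).IsPath) (hp : a ∈ p.support) (hq : a ∈ q.support) : a = v := by
  by_contra h
  exact hpq.ne_of_mem_support_of_append h hp hq rfl

lemma not_adj_of_length_eq_dist {p : G.Walk u v} (hp : p.length = G.dist u v)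
    (ha : a ∈ p.support) (hb : b ∈ p.support) (hc : c ∈ p.support) (hab : G.Adj a b)
    (hbc : G.Adj b c) : ¬ G.Adj a c := by
  intro hac
  -- `G.dist u` is injective on `p` and changes by at most one along an edge
  have hne : ∀ {d e : V}, d ∈ p.support → e ∈ p.support → G.Adj d e →
      G.dist u d ≠ G.dist u e := fun hd he hde h =>
    hde.ne (eq_of_dist_eq_of_length_eq_dist hp hd he h)
  have := hne ha hb hab
  have := hne hb hc hbc
  have := hne ha hc hac
  have := hab.diff_dist_adj (u := u)
  have := hbc.diff_dist_adj (u := u)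
  have := hac.diff_dist_adj (u := u)
  omega

lemma exists_length_eq_dist_through_common_neighbor {Q : G.Walk y z} (hQ : Q.length = G.dist y z)
    (ha : a ∈ Q.support) (hb : b ∈ Q.support) (hxa : G.Adj x a) (hxb : G.Adj x b)
    (hab : a ≠ b) (hnab : ¬ G.Adj a b) :
    ∃ Q' : G.Walk y z, Q'.length = G.dist y z ∧ x ∈ Q'.support ∧
      ∀ v ∈ Q'.support, v = x ∨ v ∈ Q.support := by
  have hdist : G.dist a b = 2 := by
    have := dist_le (cons hxa.symm (cons hxb nil))
    have := (hxa.symm.reachable.trans hxb.reachable).pos_dist_of_ne hab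
    have := mt dist_eq_one_iff_adj.1 hnab
    simp only [length_cons, length_nil] at *
    omega
  suffices key : ∀ {c d : V}, G.Adj x c → G.Adj x d → ∀ M : G.Walk c d, M.IsSubwalk Q →
      M.length = 2 → ∃ Q' : G.Walk y z, Q'.length = G.dist y z ∧ x ∈ Q'.support ∧
        ∀ v ∈ Q'.support, v = x ∨ v ∈ Q.support by
    obtain ⟨M, hM | hM⟩ := exists_isSubwalk_of_mem_support ha hb
    · exact key hxa hxb M hM (by rw [length_eq_dist_of_subwalk hQ hM, hdist])
    · exact key hxb hxa M.reverse hM (by rw [length_eq_dist_of_subwalk hQ hM, dist_comm, hdist])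
  rintro c d hxc hxd M ⟨A, B, rfl⟩ hM
  refine ⟨(A.append (cons hxc.symm (cons hxd nil))).append B, ?_, by simp, fun v hv => ?_⟩
  · simp only [length_append, length_cons, length_nil] at hQ ⊢
    omega
  · simp only [mem_support_append_iff, support_cons, support_nil, List.mem_cons,
      List.not_mem_nil] at hv ⊢
    have := A.end_mem_support
    have := M.start_mem_support
    have := M.end_mem_support
    grind

lemma mem_edges_map_of_mem (f : G →g G') {p : G.Walk c d} (he : s(a, b) ∈ p.edges) :
    s(f a, f b) ∈ (p.map f).edges := by
  rw [edges_map]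
  exact List.mem_map_of_mem he

lemma exists_mem_support_of_mem_support_map {f : G →g G'} (hf : Function.Injective f)
    {c' d' : V} {p : G.Walk c d} {q : G.Walk c' d'} {v : W} (hp : v ∈ (p.map f).support)
    (hq : v ∈ (q.map f).support) : ∃ t ∈ p.support, t ∈ q.support ∧ f t = v := by
  simp only [support_map, List.mem_map] at hp hq
  obtain ⟨t, ht, rfl⟩ := hp
  obtain ⟨t', ht', he⟩ := hq
  exact ⟨t, ht, hf he ▸ ht', rfl⟩

end Walk

variable {V : Type*} {G : SimpleGraph V} {S : Set V} {m n : ℕ} {u v w a : V}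

def ReachesWithin (G : SimpleGraph V) (S : Set V) (n : ℕ) (v : V) : Prop :=
  ∃ s ∈ S, ∃ p : G.Walk v s, p.length ≤ n

lemma ReachesWithin.mono (h : G.ReachesWithin S m v) (hmn : m ≤ n) : G.ReachesWithin S n v :=
  let ⟨s, hs, p, hp⟩ := h
  ⟨s, hs, p, hp.trans hmn⟩

lemma ReachesWithin.of_adj (h : G.ReachesWithin S n w) (hvw : G.Adj v w) :
    G.ReachesWithin S (n + 1) v :=
  let ⟨s, hs, p, hp⟩ := h
  ⟨s, hs, .cons hvw p, by simpa using hp⟩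

lemma reachesWithin_zero : G.ReachesWithin S 0 v ↔ v ∈ S := by
  refine ⟨fun ⟨s, hs, p, hp⟩ => ?_, fun hv => ⟨v, hv, .nil, le_rfl⟩⟩
  rwa [Walk.eq_of_length_eq_zero (Nat.le_zero.1 hp)]

lemma ReachesWithin.exists_adj (h : G.ReachesWithin S (n + 1) v) (hv : v ∉ S) :
    ∃ w, G.Adj v w ∧ G.ReachesWithin S n w := by
  obtain ⟨s, hs, p, hp⟩ := h
  cases p with
  | nil => exact absurd hs hv
  | cons hvw p => exact ⟨_, hvw, s, hs, p, by simpa using hp⟩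

lemma Reachable.induce_of_dist_lt {D : Set V} (hr : G.Reachable u a)
    (hD : ∀ v, G.Reachable u v → G.dist u v < G.dist u a → v ∈ D) (hu : u ∈ D) (ha : a ∈ D) :
    (G.induce D).Reachable ⟨u, hu⟩ ⟨a, ha⟩ := by
  classical
  obtain ⟨p, hp⟩ := hr.exists_walk_length_eq_dist
  refine ⟨p.induce D fun v hv => ?_⟩
  by_cases hva : v = a
  · exact hva ▸ ha
  · exact hD v (p.takeUntil v hv).reachable
      ((dist_le _).trans_lt (hp ▸ p.length_takeUntil_lt_length hv hva))

end SimpleGraph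

open SimpleGraph Walk

section Confluence

variable {V W : Type*} {G : SimpleGraph V} {T : Set V} {a b w x y z q : V} {Q : G.Walk y z}

theorem isConfluence_of_isChordless (hQ : Q.IsPath) (hc : Q.IsChordless)
    (hx : x ∈ Q.support) : IsConfluence G {v | v ∈ Q.support} x y z := by
  obtain ⟨A, B, rfl⟩ := mem_support_iff_exists_append.1 hx
  refine .inl ⟨x, nil, A.reverse, B, .nil, hQ.of_append_left.reverse, hQ.of_append_right,
    by simp, by simp, fun v hA hB => hQ.eq_of_mem_support_append (by simpa using hA) hB,
    fun v => ?_, fun a ha b hb hab => ?_⟩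
  · have := A.end_mem_support
    simp only [Set.mem_ofPred_eq, mem_support_append_iff, support_nil, List.mem_singleton,
      support_reverse, List.mem_reverse]
    grind
  · simpa [or_comm] using hc.mem_edges ha hb hab

theorem isConfluence_of_triangle (hQ : Q.IsPath) (hc : Q.IsChordless)
    {hab : G.Adj a b} (hsub : hab.toWalk.IsSubwalk Q) (hxQ : x ∉ Q.support) (hxa : G.Adj x a)
    (hxb : G.Adj x b) (hx : ∀ v ∈ Q.support, G.Adj x v → v = a ∨ v = b) :
    IsConfluence G (insert x {v | v ∈ Q.support}) x y z := by
  obtain ⟨A, B, rfl⟩ := hsub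
  have hQAB : (A.append hab.toWalk).append B = A.append (cons hab B) := by
    rw [← append_assoc, Adj.toWalk, cons_append, nil_append]
  rw [hQAB] at hQ hc hxQ hx ⊢
  have hB := hQ.of_append_right
  rw [cons_isPath_iff] at hB
  have hxA : x ∉ A.support := fun h => hxQ ((mem_support_append_iff _ _).2 (.inl h))
  have hxB : x ∉ B.support := fun h => hxQ ((mem_support_append_iff _ _).2 (.inr (by simp [h])))
  refine .inr ⟨x, a, b, nil, A.reverse, B, .nil, hQ.of_append_left.reverse, hB.1, hxa, hab, hxb,
    by simpa using hxA, by simpa using hxB, fun v hA hvB => ?_, fun v => ?_,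
    fun c hc' d hd hcd => ?_⟩
  · rw [support_reverse, List.mem_reverse] at hA
    have := hQ.eq_of_mem_support_append hA (by simp [hvB])
    exact hB.2 (this ▸ hvB)
  · have := A.end_mem_support
    simp only [Set.mem_insert_iff, Set.mem_ofPred_eq, mem_support_append_iff, support_cons,
      List.mem_cons, support_nil, support_reverse, List.mem_reverse]
    grind
  · rcases hc' with rfl | hc' <;> rcases hd with rfl | hd
    · exact absurd rfl hcd.ne
    · rcases hx d hd hcd with rfl | rfl <;> simp
    · rcases hx c hc' hcd.symm with rfl | rfl <;> simp [Sym2.eq_swap]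
    · have := hc.mem_edges hc' hd hcd
      simp only [edges_append, edges_cons, List.mem_append, List.mem_cons] at this
      simp only [edges_nil, List.not_mem_nil, edges_reverse, List.mem_reverse]
      tauto

theorem IsConfluence.mem (h : IsConfluence G T x y z) : x ∈ T ∧ y ∈ T ∧ z ∈ T := by
  rcases h with ⟨_, px, py, pz, -, -, -, -, -, -, hT, -⟩ |
    ⟨_, _, _, px, py, pz, -, -, -, -, -, -, -, -, -, hT, -⟩ <;>
  exact ⟨(hT x).2 (.inl px.end_mem_support), (hT y).2 (.inr (.inl py.end_mem_support)),
    (hT z).2 (.inr (.inr pz.end_mem_support))⟩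

lemma edge_eq_or_mem_of_mem_insert (hx : ∀ v ∈ T, G.Adj x v → v = w) {c d : V}
    (hc : c ∈ insert x T) (hd : d ∈ insert x T) (hcd : G.Adj c d) :
    s(c, d) = s(w, x) ∨ (c ∈ T ∧ d ∈ T) := by
  rcases hc with rfl | hc <;> rcases hd with rfl | hd
  · exact absurd rfl hcd.ne
  · exact .inl (by rw [hx d hd hcd, Sym2.eq_swap])
  · exact .inl (by rw [hx c hc hcd.symm])
  · exact .inr ⟨hc, hd⟩

theorem IsConfluence.extend (h : IsConfluence G T w y z) (hwx : G.Adj w x) (hxT : x ∉ T)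
    (hx : ∀ v ∈ T, G.Adj x v → v = w) : IsConfluence G (insert x T) x y z := by
  rcases h with ⟨c, px, py, pz, hpx, hpy, hpz, h1, h2, h3, hT, hE⟩ |
    ⟨x', y', z', px, py, pz, hpx, hpy, hpz, hxy, hyz, hxz, h1, h2, h3, hT, hE⟩
  · have hxpy : x ∉ py.support := fun h => hxT ((hT x).2 (.inr (.inl h)))
    have hxpz : x ∉ pz.support := fun h => hxT ((hT x).2 (.inr (.inr h)))
    refine .inl ⟨c, px.concat hwx, py, pz, hpx.concat (fun h => hxT ((hT x).2 (.inl h))) hwx,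
      hpy, hpz, fun v hv hv' => ?_, fun v hv hv' => ?_, h3, fun v => ?_, fun a ha b hb hab => ?_⟩
    · rw [support_concat, List.mem_append, List.mem_singleton] at hv
      exact hv.elim (h1 v · hv') (fun h => absurd (h ▸ hv') hxpy)
    · rw [support_concat, List.mem_append, List.mem_singleton] at hv
      exact hv.elim (h2 v · hv') (fun h => absurd (h ▸ hv') hxpz)
    · simp only [Set.mem_insert_iff, hT, support_concat, List.mem_append, List.mem_singleton]
      tauto
    · simp only [edges_concat, List.concat_eq_append, List.mem_append, List.mem_singleton]
      rcases edge_eq_or_mem_of_mem_insert hx ha hb hab with he | ⟨ha, hb⟩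
      · exact .inl (.inr he)
      · rcases hE a ha b hb hab with he | he | he
        exacts [.inl (.inl he), .inr (.inl he), .inr (.inr he)]
  · have hxpy : x ∉ py.support := fun h => hxT ((hT x).2 (.inr (.inl h)))
    have hxpz : x ∉ pz.support := fun h => hxT ((hT x).2 (.inr (.inr h)))
    refine .inr ⟨x', y', z', px.concat hwx, py, pz,
      hpx.concat (fun h => hxT ((hT x).2 (.inl h))) hwx, hpy, hpz, hxy, hyz, hxz,
      fun v hv hv' => ?_, fun v hv hv' => ?_, h3, fun v => ?_, fun a ha b hb hab => ?_⟩
    · rw [support_concat, List.mem_append, List.mem_singleton] at hv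
      exact hv.elim (h1 v · hv') (fun h => hxpy (h ▸ hv'))
    · rw [support_concat, List.mem_append, List.mem_singleton] at hv
      exact hv.elim (h2 v · hv') (fun h => hxpz (h ▸ hv'))
    · simp only [Set.mem_insert_iff, hT, support_concat, List.mem_append, List.mem_singleton]
      tauto
    · simp only [edges_concat, List.concat_eq_append, List.mem_append, List.mem_singleton]
      rcases edge_eq_or_mem_of_mem_insert hx ha hb hab with he | ⟨ha, hb⟩
      · exact .inl (.inr he)
      · rcases hE a ha b hb hab with he | he | he | he | he | he
        exacts [.inl (.inl he), .inr (.inl he), .inr (.inr (.inl he)),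
          .inr (.inr (.inr (.inl he))), .inr (.inr (.inr (.inr (.inl he)))),
          .inr (.inr (.inr (.inr (.inr he))))]

theorem IsConfluence.map {G' : SimpleGraph W} (f : G ↪g G') (h : IsConfluence G T x y z) :
    IsConfluence G' (f '' T) (f x) (f y) (f z) := by
  have hsym : ∀ {t t' c d : V}, s(t, t') = s(c, d) → s(f t, f t') = s(f c, f d) := fun he => by
    simpa using congrArg (Sym2.map f) he
  rcases h with ⟨c, px, py, pz, hpx, hpy, hpz, h1, h2, h3, hT, hE⟩ |
    ⟨x', y', z', px, py, pz, hpx, hpy, hpz, hxy, hyz, hxz, h1, h2, h3, hT, hE⟩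
  · refine .inl ⟨f c, px.map f.toHom, py.map f.toHom, pz.map f.toHom, hpx.map f.injective,
      hpy.map f.injective, hpz.map f.injective, ?_, ?_, ?_, fun v => ?_, ?_⟩
    · intro v hv hv'
      obtain ⟨t, ht, ht', rfl⟩ := exists_mem_support_of_mem_support_map f.injective hv hv'
      rw [h1 t ht ht']
      rfl
    · intro v hv hv'
      obtain ⟨t, ht, ht', rfl⟩ := exists_mem_support_of_mem_support_map f.injective hv hv'
      rw [h2 t ht ht']
      rfl
    · intro v hv hv'
      obtain ⟨t, ht, ht', rfl⟩ := exists_mem_support_of_mem_support_map f.injective hv hv'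
      rw [h3 t ht ht']
      rfl
    · simp only [Set.mem_image, hT, Walk.support_map, List.mem_map, or_and_right, exists_or]
      rfl
    · rintro _ ⟨a, ha, rfl⟩ _ ⟨b, hb, rfl⟩ hab
      rcases hE a ha b hb (f.map_adj_iff.1 hab) with he | he | he
      exacts [.inl (mem_edges_map_of_mem _ he), .inr (.inl (mem_edges_map_of_mem _ he)),
        .inr (.inr (mem_edges_map_of_mem _ he))]
  · refine .inr ⟨f x', f y', f z', px.map f.toHom, py.map f.toHom, pz.map f.toHom,
      hpx.map f.injective, hpy.map f.injective, hpz.map f.injective, f.map_adj_iff.2 hxy,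
      f.map_adj_iff.2 hyz, f.map_adj_iff.2 hxz, ?_, ?_, ?_, fun v => ?_, ?_⟩
    · intro v hv hv'
      obtain ⟨t, ht, ht', -⟩ := exists_mem_support_of_mem_support_map f.injective hv hv'
      exact h1 t ht ht'
    · intro v hv hv'
      obtain ⟨t, ht, ht', -⟩ := exists_mem_support_of_mem_support_map f.injective hv hv'
      exact h2 t ht ht'
    · intro v hv hv'
      obtain ⟨t, ht, ht', -⟩ := exists_mem_support_of_mem_support_map f.injective hv hv'
      exact h3 t ht ht'
    · simp only [Set.mem_image, hT, Walk.support_map, List.mem_map, or_and_right, exists_or]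
      rfl
    · rintro _ ⟨a, ha, rfl⟩ _ ⟨b, hb, rfl⟩ hab
      rcases hE a ha b hb (f.map_adj_iff.1 hab) with he | he | he | he | he | he
      exacts [.inl (mem_edges_map_of_mem _ he), .inr (.inl (mem_edges_map_of_mem _ he)),
        .inr (.inr (.inl (mem_edges_map_of_mem _ he))), .inr (.inr (.inr (.inl (hsym he)))),
        .inr (.inr (.inr (.inr (.inl (hsym he))))), .inr (.inr (.inr (.inr (.inr (hsym he)))))]

theorem exists_isConfluence_of_adj (hQ : Q.length = G.dist y z) (hxQ : x ∉ Q.support)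
    (hq : q ∈ Q.support) (hxq : G.Adj x q) :
    ∃ T ⊆ insert x {v | v ∈ Q.support}, IsConfluence G T x y z := by
  have hpath := Q.isPath_of_length_eq_dist hQ
  have hchord := isChordless_of_length_eq_dist hQ
  by_cases hfar : ∃ a ∈ Q.support, ∃ b ∈ Q.support,
      G.Adj x a ∧ G.Adj x b ∧ a ≠ b ∧ ¬ G.Adj a b
  · obtain ⟨a, ha, b, hb, hxa, hxb, hab, hnab⟩ := hfar
    obtain ⟨Q', hQ', hxQ', hsub⟩ :=
      exists_length_eq_dist_through_common_neighbor hQ ha hb hxa hxb hab hnab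
    exact ⟨_, fun v hv => hsub v hv,
      isConfluence_of_isChordless (Q'.isPath_of_length_eq_dist hQ')
        (isChordless_of_length_eq_dist hQ') hxQ'⟩
  push Not at hfar
  by_cases htwo : ∃ b ∈ Q.support, G.Adj x b ∧ b ≠ q
  · obtain ⟨b, hb, hxb, hbq⟩ := htwo
    have hqb := hfar q hq b hb hxq hxb hbq.symm
    have honly : ∀ v ∈ Q.support, G.Adj x v → v = q ∨ v = b := by
      intro v hv hxv
      by_contra! hne
      exact not_adj_of_length_eq_dist hQ hv hq hb (hfar v hv q hq hxv hxq hne.1)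
        hqb (hfar v hv b hb hxv hxb hne.2)
    refine ⟨_, subset_rfl, ?_⟩
    rcases (isSubwalk_toWalk_iff_mem_edges hqb).2 (hchord.mem_edges hq hb hqb) with h | h
    · exact isConfluence_of_triangle hpath hchord h hxQ hxq hxb honly
    · exact isConfluence_of_triangle hpath hchord h hxQ hxb hxq fun v hv hxv =>
        (honly v hv hxv).symm
  push Not at htwo
  exact ⟨_, subset_rfl, (isConfluence_of_isChordless hpath hchord hq).extend hxq.symm hxQ htwo⟩

theorem exists_isConfluence_of_reachesWithin (hQ : Q.length = G.dist y z) (n : ℕ) :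
    ∀ x, G.ReachesWithin {v | v ∈ Q.support} (n + 1) x →
      ¬ G.ReachesWithin {v | v ∈ Q.support} n x → ∃ T, IsConfluence G T x y z ∧
        ∀ v ∈ T, v ≠ x → G.ReachesWithin {v | v ∈ Q.support} n v := by
  induction n with
  | zero =>
    intro x hx hx'
    rw [reachesWithin_zero] at hx'
    obtain ⟨q, hxq, hq⟩ := hx.exists_adj hx'
    obtain ⟨T, hTQ, hT⟩ := exists_isConfluence_of_adj hQ hx' (reachesWithin_zero.1 hq :) hxq
    exact ⟨T, hT, fun v hv hvx => reachesWithin_zero.2 ((hTQ hv).resolve_left hvx)⟩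
  | succ n ih =>
    intro x hx hx'
    obtain ⟨x₁, hxx₁, hx₁⟩ :=
      hx.exists_adj fun h => hx' (reachesWithin_zero.2 h |>.mono (by omega))
    obtain ⟨T, hT, hTn⟩ := ih x₁ hx₁ fun h => hx' (h.of_adj hxx₁)
    have hxT : x ∉ T := fun h => hx' ((hTn x h hxx₁.ne).mono n.le_succ)
    have hnbr : ∀ v ∈ T, G.Adj x v → v = x₁ := fun v hv hxv => by
      by_contra hvx₁
      exact hx' ((hTn v hv hvx₁).of_adj hxv)
    refine ⟨_, hT.extend hxx₁.symm hxT hnbr, fun v hv hvx => ?_⟩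
    obtain rfl | hv := hv
    · exact absurd rfl hvx
    by_cases hvx₁ : v = x₁
    · exact hvx₁ ▸ hx₁
    · exact (hTn v hv hvx₁).mono n.le_succ

theorem exists_isConfluence_of_reachable (hxy : G.Reachable x y) (hyz : G.Reachable y z) :
    ∃ T, IsConfluence G T x y z := by
  classical
  obtain ⟨Q, hQ⟩ := hyz.exists_walk_length_eq_dist
  by_cases hxQ : x ∈ Q.support
  · exact ⟨_, isConfluence_of_isChordless (Q.isPath_of_length_eq_dist hQ)
      (isChordless_of_length_eq_dist hQ) hxQ⟩
  have hreach : ∃ n, G.ReachesWithin {v | v ∈ Q.support} n x :=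
    ⟨_, y, Q.start_mem_support, hxy.some, le_rfl⟩
  have hspec := Nat.find_spec hreach
  obtain ⟨n, hn⟩ : ∃ n, Nat.find hreach = n + 1 :=
    Nat.exists_eq_succ_of_ne_zero fun h => hxQ (reachesWithin_zero.1 (h ▸ hspec) :)
  rw [hn] at hspec
  obtain ⟨T, hT, -⟩ := exists_isConfluence_of_reachesWithin hQ n x hspec
    (Nat.find_min hreach (by omega))
  exact ⟨T, hT⟩

end Confluence

theorem exists_confluence_general {V : Type*} (G : SimpleGraph V) (u : V) (i : ℕ)
    (x y z : V) (hx : G.dist u x = i) (hx' : G.Reachable u x)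
    (hy : G.dist u y = i) (hy' : G.Reachable u y)
    (hz : G.dist u z = i) (hz' : G.Reachable u z) :
    ∃ S : Set V, S ⊆ {v | G.Reachable u v ∧ G.dist u v ≤ i - 1} ∧
      IsConfluence G (S ∪ {x, y, z}) x y z := by
  set B := {v | G.Reachable u v ∧ G.dist u v ≤ i - 1}
  set D := B ∪ {x, y, z}
  have hu : u ∈ D := .inl ⟨.refl u, by simp⟩
  have hB : ∀ a, G.dist u a = i →
      ∀ v, G.Reachable u v → G.dist u v < G.dist u a → v ∈ D :=
    fun a ha v hv hva => .inl ⟨hv, by omega⟩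
  have rx := hx'.induce_of_dist_lt (hB x hx) hu (.inr (by simp))
  have ry := hy'.induce_of_dist_lt (hB y hy) hu (.inr (by simp))
  have rz := hz'.induce_of_dist_lt (hB z hz) hu (.inr (by simp))
  obtain ⟨T, hT⟩ := exists_isConfluence_of_reachable (rx.symm.trans ry) (ry.symm.trans rz)
  have hTG : IsConfluence G (Subtype.val '' T) x y z := hT.map (Embedding.induce D)
  obtain ⟨hxT, hyT, hzT⟩ := hTG.mem
  refine ⟨Subtype.val '' T ∩ B, Set.inter_subset_right, ?_⟩
  convert hTG using 1
  ext v
  have hvD : v ∈ Subtype.val '' T → v ∈ D := fun ⟨t, _, ht⟩ => ht ▸ t.2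
  simp only [Set.mem_union, Set.mem_inter_iff, Set.mem_insert_iff, Set.mem_singleton_iff]
  grind

/-- Any three distinct vertices at distance exactly `i ≥ 1` from `u` admit a confluence whose
extra vertices all lie in the layers `{u} ∪ N₁(u) ∪ ⋯ ∪ N_{i-1}(u)`. -/
theorem exists_confluence {V : Type*} (G : SimpleGraph V) (u : V) (i : ℕ) (hi : 1 ≤ i)
    (x y z : V) (hx : G.dist u x = i) (hx' : G.Reachable u x)
    (hy : G.dist u y = i) (hy' : G.Reachable u y)
    (hz : G.dist u z = i) (hz' : G.Reachable u z)
    (hxy : x ≠ y) (hxz : x ≠ z) (hyz : y ≠ z) :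
    ∃ S : Set V, S ⊆ {v | G.Reachable u v ∧ G.dist u v ≤ i - 1} ∧
      IsConfluence G (S ∪ {x, y, z}) x y z :=
  exists_confluence_general G u i x y z hx hx' hy hy' hz hz'
end

section
/- Let G be an ISK4-free graph, let P be a flat path of length at least 2 in G, and let G' be the graph obtained from G by deleting the interior of P and adding an edge between its two ends. Then G' is ISK4-free. -/
open SimpleGraph

/-!
An ISK4 of the reduced graph is an ISK4 of `G ⊔ {ab}` avoiding the interior of `P`. Replacing the
edge `ab`, in the one path of the subdivision that uses it, by `P` yields a subdivision of `K₄` in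
`G`, and it is again induced: the added vertices are interior vertices of `P`, whose neighbours
in `G` all lie on `P` by flatness, and `ab` is not an edge of `G` because `P` is induced of
length at least 2.
-/

namespace SimpleGraph

variable {V : Type*} {G : SimpleGraph V}

theorem Adj.of_sup_edge {a b x y : V} (h : (G ⊔ fromEdgeSet {s(a, b)}).Adj x y)
    (hxy : s(x, y) ≠ s(a, b)) : G.Adj x y := by
  simpa [fromEdgeSet_adj, hxy] using h

namespace Walk

theorem IsPath.append {u v w : V} {p : G.Walk u v} {q : G.Walk v w} (hp : p.IsPath)
    (hq : q.IsPath) (hpq : ∀ x ∈ p.support, x ∈ q.support → x = v) : (p.append q).IsPath := by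
  have hq' := hq.support_nodup
  rw [← q.cons_tail_support, List.nodup_cons] at hq'
  rw [isPath_def, support_append, List.nodup_append]
  refine ⟨hp.support_nodup, hq'.2, fun x hx y hy hxy => ?_⟩
  subst hxy
  exact hq'.1 (hpq x hx (List.mem_of_mem_tail hy) ▸ hy)

theorem IsPath.mem_edges_of_adj {a b v w : V} {P : G.Walk a b} (hP : P.IsPath)
    (hv : v ∈ P.support) (hva : v ≠ a) (hvb : v ≠ b) (hdeg : (G.neighborSet v).encard = 2)
    (hvw : G.Adj v w) : s(v, w) ∈ P.edges := by
  obtain ⟨n, rfl, hn⟩ := mem_support_iff_exists_getVert.mp hv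
  have h0 : n ≠ 0 := by rintro rfl; simp at hva
  have hlt : n < P.length := lt_of_le_of_ne hn (by rintro rfl; simp at hvb)
  have hfin : (P.toSubgraph.neighborSet (P.getVert n)).Finite := by
    rw [hP.neighborSet_toSubgraph_internal h0 hlt]; exact Set.toFinite _
  have heq : P.toSubgraph.neighborSet (P.getVert n) = G.neighborSet (P.getVert n) := by
    refine hfin.eq_of_subset_of_encard_le (fun _ h => P.toSubgraph.adj_sub h) ?_
    rw [hdeg, ← hfin.cast_ncard_eq, hP.ncard_neighborSet_toSubgraph_internal_eq_two h0 hlt]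
    rfl
  rw [← mem_edges_toSubgraph, Subgraph.mem_edgeSet, ← Subgraph.mem_neighborSet, heq]
  exact hvw

section ReplaceEdge

variable [DecidableEq V] {a b : V}

def replaceEdge : ∀ {x y : V}, (G ⊔ fromEdgeSet {s(a, b)}).Walk x y → G.Walk a b → G.Walk x y
  | _, _, nil, _ => nil
  | x, _, cons (v := z) h w, P =>
    if hab : x = a ∧ z = b then (P.copy hab.1.symm hab.2.symm).append (w.replaceEdge P)
    else if hba : x = b ∧ z = a then
      (P.reverse.copy hba.1.symm hba.2.symm).append (w.replaceEdge P)
    else cons (h.of_sup_edge (by rw [Ne, Sym2.eq_iff]; tauto)) (w.replaceEdge P)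

variable {P : G.Walk a b}

theorem mem_support_replaceEdge {x y v : V} (w : (G ⊔ fromEdgeSet {s(a, b)}).Walk x y) :
    v ∈ (w.replaceEdge P).support ↔ v ∈ w.support ∨ s(a, b) ∈ w.edges ∧ v ∈ P.support := by
  induction w with
  | nil => simp [replaceEdge]
  | cons h w ih =>
    rw [replaceEdge]
    split_ifs with hab hba
    · obtain ⟨rfl, rfl⟩ := hab
      simp only [mem_support_append_iff, support_copy, ih, support_cons, edges_cons,
        List.mem_cons]
      have := P.start_mem_support
      grind
    · obtain ⟨rfl, rfl⟩ := hba
      simp only [mem_support_append_iff, support_copy, support_reverse, List.mem_reverse, ih,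
        support_cons, edges_cons, List.mem_cons]
      have := P.end_mem_support
      grind [Sym2.eq_swap]
    · simp only [support_cons, List.mem_cons, ih, edges_cons]
      grind [Sym2.eq_iff]

theorem mem_edges_replaceEdge {x y : V} {e : Sym2 V}
    (w : (G ⊔ fromEdgeSet {s(a, b)}).Walk x y) :
    e ∈ (w.replaceEdge P).edges ↔ e ∈ w.edges ∧ e ≠ s(a, b) ∨ s(a, b) ∈ w.edges ∧ e ∈ P.edges := by
  induction w with
  | nil => simp [replaceEdge]
  | cons h w ih =>
    rw [replaceEdge]
    split_ifs with hab hba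
    · obtain ⟨rfl, rfl⟩ := hab
      simp only [edges_append, edges_copy, List.mem_append, ih, edges_cons, List.mem_cons]
      grind
    · obtain ⟨rfl, rfl⟩ := hba
      simp only [edges_append, edges_copy, edges_reverse, List.mem_append, List.mem_reverse, ih,
        edges_cons, List.mem_cons]
      grind [Sym2.eq_swap]
    · simp only [edges_cons, List.mem_cons, ih]
      grind [Sym2.eq_iff]

theorem length_le_length_replaceEdge {x y : V} (w : (G ⊔ fromEdgeSet {s(a, b)}).Walk x y) :
    w.length ≤ (w.replaceEdge P).length := by
  induction w with
  | nil => simp [replaceEdge]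
  | cons h w ih =>
    rw [replaceEdge]
    split_ifs with hab hba
    · obtain ⟨rfl, rfl⟩ := hab
      have : P.length ≠ 0 := fun h0 => h.ne (P.eq_of_length_eq_zero h0)
      simp only [length_append, length_copy, length_cons]
      omega
    · obtain ⟨rfl, rfl⟩ := hba
      have : P.length ≠ 0 := fun h0 => h.ne (P.eq_of_length_eq_zero h0).symm
      simp only [length_append, length_copy, length_reverse, length_cons]
      omega
    · simp only [length_cons]
      omega

theorem IsPath.replaceEdge {x y : V} {w : (G ⊔ fromEdgeSet {s(a, b)}).Walk x y}
    (hw : w.IsPath) (hP : P.IsPath) (hwP : ∀ v ∈ w.support, v ∈ P.support → v = a ∨ v = b) :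
    (w.replaceEdge P).IsPath := by
  induction w with
  | nil => simp [Walk.replaceEdge]
  | cons h w ih =>
    rw [cons_isPath_iff] at hw
    have hwP' : ∀ v ∈ w.support, v ∈ P.support → v = a ∨ v = b := fun v hv =>
      hwP v (List.mem_cons_of_mem _ hv)
    have hw_ab : s(a, b) ∈ w.edges → a ∈ w.support ∧ b ∈ w.support := fun he =>
      ⟨w.fst_mem_support_of_mem_edges he, w.snd_mem_support_of_mem_edges he⟩
    rw [Walk.replaceEdge]
    split_ifs with hab hba
    · obtain ⟨rfl, rfl⟩ := hab
      refine ((isPath_copy _ _ _).mpr hP).append (ih hw.1 hwP') fun v hvP hv => ?_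
      rw [support_copy] at hvP
      rw [mem_support_replaceEdge] at hv
      grind
    · obtain ⟨rfl, rfl⟩ := hba
      refine ((isPath_copy _ _ _).mpr hP.reverse).append (ih hw.1 hwP') fun v hvP hv => ?_
      rw [support_copy, support_reverse, List.mem_reverse] at hvP
      rw [mem_support_replaceEdge] at hv
      grind
    · refine (ih hw.1 hwP').cons fun hx => ?_
      rw [mem_support_replaceEdge] at hx
      have := hwP _ (List.mem_cons_self ..)
      grind

theorem mem_support_of_mem_support_replaceEdge {x y v : V}
    {w : (G ⊔ fromEdgeSet {s(a, b)}).Walk x y} (hv : v ∈ (w.replaceEdge P).support)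
    (hvP : v ∈ P.support → v = a ∨ v = b) : v ∈ w.support := by
  rcases (mem_support_replaceEdge w).mp hv with hv | ⟨he, hv⟩
  · exact hv
  · rcases hvP hv with rfl | rfl
    exacts [w.fst_mem_support_of_mem_edges he, w.snd_mem_support_of_mem_edges he]

end ReplaceEdge

section Induce

variable {s : Set V} {u v : V}

theorem mem_support_induce_iff (w : G.Walk u v) (hw : ∀ x ∈ w.support, x ∈ s) {x : s} :
    x ∈ (w.induce s hw).support ↔ (x : V) ∈ w.support := by
  simp

theorem mem_edges_induce_iff (w : G.Walk u v) (hw : ∀ x ∈ w.support, x ∈ s) {e : Sym2 s} :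
    e ∈ (w.induce s hw).edges ↔ e.map Subtype.val ∈ w.edges := by
  have : (w.induce s hw).edges.map (Sym2.map Subtype.val) = w.edges :=
    (edges_map _ _).symm.trans (congrArg edges (w.map_induce hw))
  rw [← this, List.mem_map_of_injective (Sym2.map.injective Subtype.val_injective)]

@[simp]
theorem length_induce (w : G.Walk u v) (hw : ∀ x ∈ w.support, x ∈ s) :
    (w.induce s hw).length = w.length :=
  (length_map _ _).symm.trans (congrArg length (w.map_induce hw))

theorem IsPath.induce {w : G.Walk u v} (hp : w.IsPath) (hw : ∀ x ∈ w.support, x ∈ s) :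
    (w.induce s hw).IsPath :=
  IsPath.of_map (f := (Embedding.induce s).toHom) (by rwa [map_induce])

end Induce

end Walk

/-- An ISK4 of `G` presented by walks of `G` itself rather than of an induced subgraph; its
vertex set is not fixed in advance but is `verts`, the union of the six paths. -/
structure InducedK4Subdivision (G : SimpleGraph V) where
  b : Fin 4 → V
  inj : Function.Injective b
  p : ∀ i j : Fin 4, i < j → G.Walk (b i) (b j)
  isPath : ∀ (i j : Fin 4) (h : i < j), (p i j h).IsPath
  len : ∀ (i j : Fin 4) (h : i < j), 1 ≤ (p i j h).length
  disj : ∀ (i j : Fin 4) (h : i < j), ∀ (k l : Fin 4) (h' : k < l), (i, j) ≠ (k, l) → ∀ v,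
      v ∈ (p i j h).support → v ∈ (p k l h').support → v = b i ∨ v = b j
  induced : ∀ (i j : Fin 4) (h : i < j) (k l : Fin 4) (h' : k < l) (v w : V),
      v ∈ (p i j h).support → w ∈ (p k l h').support → G.Adj v w →
      ∃ (m n : Fin 4) (h'' : m < n), s(v, w) ∈ (p m n h'').edges

namespace InducedK4Subdivision

variable (X : G.InducedK4Subdivision)

def verts : Set V := {v | ∃ (i j : Fin 4) (h : i < j), v ∈ (X.p i j h).support}

theorem mem_verts_of_mem_support {i j : Fin 4} {h : i < j} {v : V}
    (hv : v ∈ (X.p i j h).support) : v ∈ X.verts :=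
  ⟨i, j, h, hv⟩

theorem b_mem_verts (i : Fin 4) : X.b i ∈ X.verts := by
  by_cases hi : i < 3
  · exact ⟨i, 3, hi, (X.p i 3 hi).start_mem_support⟩
  · obtain rfl : i = 3 := by omega
    exact ⟨0, 3, by decide, (X.p 0 3 _).end_mem_support⟩

def toK4Subdivision : K4Subdivision (G.induce X.verts) where
  b i := ⟨X.b i, X.b_mem_verts i⟩
  inj _ _ h := X.inj (congrArg Subtype.val h)
  p i j h := (X.p i j h).induce X.verts fun _ => X.mem_verts_of_mem_support
  isPath i j h := (X.isPath i j h).induce _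
  len i j h := by simpa using X.len i j h
  disj i j h k l h' hne v hv hv' := by
    rw [Walk.mem_support_induce_iff] at hv hv'
    rcases X.disj i j h k l h' hne v hv hv' with hvb | hvb
    · exact .inl (Subtype.ext hvb)
    · exact .inr (Subtype.ext hvb)
  coverV v := by
    obtain ⟨i, j, h, hv⟩ := v.2
    exact ⟨i, j, h, (Walk.mem_support_induce_iff _ _).mpr hv⟩
  coverE e he := by
    induction e using Sym2.ind with
    | _ v w =>
    obtain ⟨i, j, h, hv⟩ := v.2
    obtain ⟨k, l, h', hw⟩ := w.2
    obtain ⟨m, n, h'', hvw⟩ := X.induced i j h k l h' v w hv hw he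
    exact ⟨m, n, h'', (Walk.mem_edges_induce_iff _ _).mpr hvw⟩

theorem eq_of_mem_edges {i j k l : Fin 4} {h : i < j} {h' : k < l} {e : Sym2 V}
    (he : e ∈ (X.p i j h).edges) (he' : e ∈ (X.p k l h').edges) : (i, j) = (k, l) := by
  by_contra hne
  induction e using Sym2.ind with
  | _ v w =>
  have hvw : v ≠ w := ((X.p i j h).adj_of_mem_edges he).ne
  have d1 := X.disj i j h k l h' hne v ((X.p i j h).fst_mem_support_of_mem_edges he)
    ((X.p k l h').fst_mem_support_of_mem_edges he')
  have d2 := X.disj i j h k l h' hne w ((X.p i j h).snd_mem_support_of_mem_edges he)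
    ((X.p k l h').snd_mem_support_of_mem_edges he')
  have d3 := X.disj k l h' i j h (Ne.symm hne) v ((X.p k l h').fst_mem_support_of_mem_edges he')
    ((X.p i j h).fst_mem_support_of_mem_edges he)
  have d4 := X.disj k l h' i j h (Ne.symm hne) w ((X.p k l h').snd_mem_support_of_mem_edges he')
    ((X.p i j h).snd_mem_support_of_mem_edges he)
  -- both ends of the shared edge are ends of both paths, forcing `{i, j} = {k, l}`
  have := X.inj
  grind [Function.Injective]

section ReplaceEdge

variable [DecidableEq V] {a b : V} (Y : (G ⊔ fromEdgeSet {s(a, b)}).InducedK4Subdivision)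

theorem disj_replaceEdge {P : G.Walk a b} (hY : ∀ v ∈ Y.verts, v ∈ P.support → v = a ∨ v = b)
    {i j k l : Fin 4} {h : i < j} {h' : k < l} (hne : (i, j) ≠ (k, l)) {v : V}
    (hv : v ∈ ((Y.p i j h).replaceEdge P).support)
    (hv' : v ∈ ((Y.p k l h').replaceEdge P).support) : v = Y.b i ∨ v = Y.b j := by
  by_cases hvY : v ∈ Y.verts
  · exact Y.disj i j h k l h' hne v (Walk.mem_support_of_mem_support_replaceEdge hv (hY v hvY))
      (Walk.mem_support_of_mem_support_replaceEdge hv' (hY v hvY))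
  · rw [Walk.mem_support_replaceEdge] at hv hv'
    have hv := hv.resolve_left fun hv => hvY (Y.mem_verts_of_mem_support hv)
    have hv' := hv'.resolve_left fun hv => hvY (Y.mem_verts_of_mem_support hv)
    exact absurd (Y.eq_of_mem_edges hv.1 hv'.1) hne

theorem induced_replaceEdge {P : G.Walk a b} (hab : ¬G.Adj a b)
    (hPflat : ∀ v ∈ P.support, v ≠ a → v ≠ b → ∀ w, G.Adj v w → s(v, w) ∈ P.edges)
    (hY : ∀ v ∈ Y.verts, v ∈ P.support → v = a ∨ v = b)
    {i j k l : Fin 4} {h : i < j} {h' : k < l} {v w : V}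
    (hv : v ∈ ((Y.p i j h).replaceEdge P).support)
    (hw : w ∈ ((Y.p k l h').replaceEdge P).support) (hvw : G.Adj v w) :
    ∃ (m n : Fin 4) (h'' : m < n), s(v, w) ∈ ((Y.p m n h'').replaceEdge P).edges := by
  have interior {i j : Fin 4} {h : i < j} {x y : V} (hx : x ∈ ((Y.p i j h).replaceEdge P).support)
      (hxP : x ∈ P.support) (hxa : x ≠ a) (hxb : x ≠ b) (hxy : G.Adj x y) :
      s(x, y) ∈ ((Y.p i j h).replaceEdge P).edges := by
    have hxY : x ∉ (Y.p i j h).support := fun hx' => by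
      rcases hY x (Y.mem_verts_of_mem_support hx') hxP with rfl | rfl <;> contradiction
    have hab_used := ((Walk.mem_support_replaceEdge _).mp hx).resolve_left hxY
    exact (Walk.mem_edges_replaceEdge _).mpr (.inr ⟨hab_used.1, hPflat x hxP hxa hxb y hxy⟩)
  by_cases hvI : v ∈ P.support ∧ v ≠ a ∧ v ≠ b
  · exact ⟨i, j, h, interior hv hvI.1 hvI.2.1 hvI.2.2 hvw⟩
  by_cases hwI : w ∈ P.support ∧ w ≠ a ∧ w ≠ b
  · refine ⟨k, l, h', ?_⟩
    simpa only [Sym2.eq_swap] using interior hw hwI.1 hwI.2.1 hwI.2.2 hvw.symm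
  have hv' := Walk.mem_support_of_mem_support_replaceEdge hv (by tauto)
  have hw' := Walk.mem_support_of_mem_support_replaceEdge hw (by tauto)
  obtain ⟨m, n, h'', he⟩ := Y.induced i j h k l h' v w hv' hw' (.inl hvw)
  refine ⟨m, n, h'', (Walk.mem_edges_replaceEdge _).mpr (.inl ⟨he, fun heq => hab ?_⟩)⟩
  rw [← G.mem_edgeSet, ← heq]
  exact hvw

def replaceEdge (P : G.Walk a b) (hP : P.IsPath) (hab : ¬G.Adj a b)
    (hPflat : ∀ v ∈ P.support, v ≠ a → v ≠ b → ∀ w, G.Adj v w → s(v, w) ∈ P.edges)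
    (hY : ∀ v ∈ Y.verts, v ∈ P.support → v = a ∨ v = b) : G.InducedK4Subdivision where
  b := Y.b
  inj := Y.inj
  p i j h := (Y.p i j h).replaceEdge P
  isPath i j h := (Y.isPath i j h).replaceEdge hP fun v hv => hY v (Y.mem_verts_of_mem_support hv)
  len i j h := (Y.len i j h).trans (Walk.length_le_length_replaceEdge _)
  disj _ _ _ _ _ _ hne _ := Y.disj_replaceEdge hY hne
  induced _ _ _ _ _ _ _ _ := Y.induced_replaceEdge hab hPflat hY

end ReplaceEdge

end InducedK4Subdivision

end SimpleGraph

namespace K4Subdivision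

open SimpleGraph

variable {V W : Type*} {G : SimpleGraph V} {H : SimpleGraph W}

def map (X : K4Subdivision H) (f : H ↪g G) : G.InducedK4Subdivision where
  b := f ∘ X.b
  inj := f.injective.comp X.inj
  p i j h := (X.p i j h).map f.toHom
  isPath i j h := (X.isPath i j h).map f.injective
  len i j h := (X.len i j h).trans_eq (Walk.length_map _ _).symm
  disj i j h k l h' hne v hv hv' := by
    rw [Walk.support_map, List.mem_map] at hv
    obtain ⟨x, hx, rfl⟩ := hv
    rw [Walk.support_map] at hv'
    exact (X.disj i j h k l h' hne x hx
      ((List.mem_map_of_injective f.injective).mp hv')).imp (congrArg f) (congrArg f)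
  induced i j h k l h' v w hv hw hvw := by
    rw [Walk.support_map, List.mem_map] at hv hw
    obtain ⟨x, -, rfl⟩ := hv
    obtain ⟨y, -, rfl⟩ := hw
    obtain ⟨m, n, h'', he⟩ := X.coverE s(x, y) (f.map_adj_iff.mp hvw)
    exact ⟨m, n, h'', by rw [Walk.edges_map]; exact List.mem_map_of_mem he⟩

theorem verts_map_subset_range (X : K4Subdivision H) (f : H ↪g G) :
    (X.map f).verts ⊆ Set.range f := by
  rintro v ⟨i, j, h, hv⟩
  obtain ⟨x, -, rfl⟩ := List.mem_map.mp ((Walk.support_map _ _) ▸ hv)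
  exact ⟨x, rfl⟩

end K4Subdivision

theorem ISK4Free.isEmpty_inducedK4Subdivision {V : Type*} {G : SimpleGraph V}
    (hG : ISK4Free G) : IsEmpty G.InducedK4Subdivision :=
  ⟨fun X => (hG X.verts).false X.toK4Subdivision⟩

/-- Reducing a flat path of length at least 2 (deleting its interior and adding an edge
between its two ends) preserves ISK4-freeness. -/
theorem isk4Free_of_reduce_flat_path {V : Type*} (G : SimpleGraph V) (hG : ISK4Free G)
    (a b : V) (P : G.Walk a b) (hP : P.IsPath) (hlen : 2 ≤ P.length)
    (hind : ∀ x ∈ P.support, ∀ y ∈ P.support, G.Adj x y → s(x, y) ∈ P.edges)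
    (hflat : ∀ v ∈ P.support, v ≠ a → v ≠ b → (G.neighborSet v).encard = 2) :
    ISK4Free ((G ⊔ SimpleGraph.fromEdgeSet {s(a, b)}).induce
      {v | v ∉ P.support ∨ v = a ∨ v = b}) := by
  classical
  have hab : ¬G.Adj a b := fun h => by
    have := hP.length_eq_one_of_mem_edges (hind a P.start_mem_support b P.end_mem_support h)
    omega
  have hPflat : ∀ v ∈ P.support, v ≠ a → v ≠ b → ∀ w, G.Adj v w → s(v, w) ∈ P.edges :=
    fun v hv hva hvb _ => hP.mem_edges_of_adj hv hva hvb (hflat v hv hva hvb)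
  refine fun s => ⟨fun X => ?_⟩
  let f : _ ↪g G ⊔ fromEdgeSet {s(a, b)} := (Embedding.induce _).comp (Embedding.induce s)
  refine hG.isEmpty_inducedK4Subdivision.false ((X.map f).replaceEdge P hP hab hPflat ?_)
  intro v hv hvP
  obtain ⟨x, rfl⟩ := X.verts_map_subset_range f hv
  exact x.1.2.resolve_left (not_not_intro hvP)
end

section
/- Every rich square G satisfies χ(G) ≤ 4. -/
open SimpleGraph

/-- `D` is the vertex set of a connected component of the subgraph of `K` induced on `A`. -/
def IsCompOf {V : Type*} (K : SimpleGraph V) (A : Set V) (D : Set V) : Prop :=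
  D ⊆ A ∧ D.Nonempty ∧ (K.induce D).Connected ∧
    ∀ x ∈ D, ∀ y ∈ A, K.Adj x y → y ∈ D

/-- `D` is (the vertex set of) a link of the square `u 0, u 1, u 2, u 3` in `K`: an induced
path whose ends attach to the square as prescribed and whose interior has no neighbour in
the square. -/
def IsLink {V : Type*} (K : SimpleGraph V) (u : Fin 4 → V) (D : Set V) : Prop :=
  ∃ (p p' : V) (w : K.Walk p p'), w.IsPath ∧
    (∀ x, x ∈ D ↔ x ∈ w.support) ∧
    (∀ x ∈ D, ∀ y ∈ D, K.Adj x y → s(x, y) ∈ w.edges) ∧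
    (∀ v ∈ w.support, v ≠ p → v ≠ p' → ∀ i, ¬ K.Adj v (u i)) ∧
    ((p = p' ∧ ∀ i, K.Adj p (u i)) ∨
     ({i | K.Adj p (u i)} = {0, 1} ∧ {i | K.Adj p' (u i)} = {2, 3}) ∨
     ({i | K.Adj p (u i)} = {0, 3} ∧ {i | K.Adj p' (u i)} = {1, 2}))

/-- `K` is a rich square: it contains an induced square `S` such that `K ∖ S` has at least
two connected components and every such component is a link of `S`. -/
def IsRichSquare {V : Type*} (K : SimpleGraph V) : Prop :=
  ∃ u : Fin 4 → V, Function.Injective u ∧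
    K.Adj (u 0) (u 1) ∧ K.Adj (u 1) (u 2) ∧ K.Adj (u 2) (u 3) ∧ K.Adj (u 3) (u 0) ∧
    ¬ K.Adj (u 0) (u 2) ∧ ¬ K.Adj (u 1) (u 3) ∧
    (∃ D₁ D₂ : Set V, IsCompOf K {v | v ∉ Set.range u} D₁ ∧
      IsCompOf K {v | v ∉ Set.range u} D₂ ∧ D₁ ≠ D₂) ∧
    (∀ D : Set V, IsCompOf K {v | v ∉ Set.range u} D → IsLink K u D)

/-!
Colour the square `u 0, u 1, u 2, u 3` alternately with two colours, which is possible since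
it has no chords, and the rest of the graph with two further colours: every component of
`K ∖ S` is a link, i.e. an induced path, hence bipartite.
-/

namespace SimpleGraph

variable {V : Type*} {G : SimpleGraph V}

lemma Walk.IsPath.exists_bool_ne_of_mem_edges {a b : V} {w : G.Walk a b} (hw : w.IsPath) :
    ∃ f : V → Bool, ∀ ⦃x y⦄, s(x, y) ∈ w.edges → f x ≠ f y := by
  classical
  induction w with
  | nil => exact ⟨fun _ => true, by simp⟩
  | @cons a c b hac p ih =>
    rw [Walk.cons_isPath_iff] at hw
    obtain ⟨f, hf⟩ := ih hw.1
    refine ⟨Function.update f a (!f c), fun x y hxy => ?_⟩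
    rcases List.mem_cons.mp (Walk.edges_cons .. ▸ hxy) with h | h
    · rcases Sym2.eq_iff.mp h with ⟨rfl, rfl⟩ | ⟨rfl, rfl⟩ <;>
        simp [Function.update_of_ne hac.ne.symm]
    · have hx : x ≠ a := fun hxa => hw.2 (hxa ▸ p.fst_mem_support_of_mem_edges h)
      have hy : y ≠ a := fun hya => hw.2 (hya ▸ p.snd_mem_support_of_mem_edges h)
      simpa [Function.update_of_ne hx, Function.update_of_ne hy] using hf h

lemma colorable_induce_two_of_forall_adj_mem_edges {s : Set V} {a b : V} {w : G.Walk a b}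
    (hw : w.IsPath) (hs : ∀ x ∈ s, ∀ y ∈ s, G.Adj x y → s(x, y) ∈ w.edges) :
    (G.induce s).Colorable 2 := by
  obtain ⟨f, hf⟩ := hw.exists_bool_ne_of_mem_edges
  simpa using (Coloring.mk (fun x : s => f x) fun {x y} hxy => hf (hs x x.2 y y.2 hxy)).colorable

lemma colorable_induce_range {ι : Type*} {n : ℕ} (u : ι → V) (c : ι → Fin n)
    (hc : ∀ i j, G.Adj (u i) (u j) → c i ≠ c j) : (G.induce (Set.range u)).Colorable n :=
  ⟨Coloring.mk (fun v => c v.2.choose) fun {v w} hvw =>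
    hc _ _ (by rwa [v.2.choose_spec, w.2.choose_spec])⟩

lemma colorable_add_of_induce_compl {S : Set V} {m n : ℕ} (hS : (G.induce S).Colorable m)
    (hSc : (G.induce Sᶜ).Colorable n) : G.Colorable (m + n) := by
  classical
  obtain ⟨c₁⟩ := hS
  obtain ⟨c₂⟩ := hSc
  let C : G.Coloring (Fin m ⊕ Fin n) := Coloring.mk
    (fun v => if h : v ∈ S then .inl (c₁ ⟨v, h⟩) else .inr (c₂ ⟨v, h⟩)) fun {v w} hvw => by
      by_cases hv : v ∈ S <;> by_cases hw : w ∈ S <;>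
        simp only [hv, hw, ↓reduceDIte, ne_eq, Sum.inl.injEq, Sum.inr.injEq, reduceCtorEq,
          not_false_eq_true]
      · exact c₁.valid hvw
      · exact c₂.valid hvw
  simpa using C.colorable

def ConnectedComponent.toInduceImage {A : Set V} (c : (G.induce A).ConnectedComponent) :
    c.toSimpleGraph →g G.induce (Subtype.val '' c.supp) where
  toFun v := ⟨v.1.1, v.1, v.2, rfl⟩
  map_rel' := id

lemma ConnectedComponent.toInduceImage_surjective {A : Set V}
    (c : (G.induce A).ConnectedComponent) : Function.Surjective c.toInduceImage := by
  rintro ⟨_, x, hx, rfl⟩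
  exact ⟨⟨x, hx⟩, rfl⟩

end SimpleGraph

section

variable {V : Type*} {G : SimpleGraph V}

lemma isCompOf_image_supp {A : Set V} (c : (G.induce A).ConnectedComponent) :
    IsCompOf G A (Subtype.val '' c.supp) := by
  refine ⟨Subtype.coe_image_subset _ _, c.nonempty_supp.image _,
    c.connected_toSimpleGraph.map c.toInduceImage c.toInduceImage_surjective, ?_⟩
  rintro _ ⟨x, hx, rfl⟩ y hy hxy
  exact ⟨⟨y, hy⟩, c.mem_supp_of_adj_mem_supp hx hxy, rfl⟩

lemma colorable_induce_of_forall_isCompOf {A : Set V} {n : ℕ}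
    (h : ∀ D, IsCompOf G A D → (G.induce D).Colorable n) : (G.induce A).Colorable n :=
  colorable_iff_forall_connectedComponent.2 fun c =>
    (h _ (isCompOf_image_supp c)).of_hom c.toInduceImage

lemma IsLink.colorable_induce_two {u : Fin 4 → V} {D : Set V} (hD : IsLink G u D) :
    (G.induce D).Colorable 2 := by
  obtain ⟨_, _, _, hw, -, hedges, -⟩ := hD
  exact colorable_induce_two_of_forall_adj_mem_edges hw hedges

end

/-- Every rich square has chromatic number at most 4. -/
theorem richSquare_chromaticNumber_le_four {V : Type*} (K : SimpleGraph V)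
    (hK : IsRichSquare K) : K.chromaticNumber ≤ 4 := by
  obtain ⟨u, -, -, -, -, -, h02, h13, -, hlink⟩ := hK
  have hS : (K.induce (Set.range u)).Colorable 2 :=
    colorable_induce_range u ![0, 1, 0, 1] fun i j hij => by
      fin_cases i <;> fin_cases j <;> simp_all [adj_comm]
  have hA : (K.induce (Set.range u)ᶜ).Colorable 2 :=
    colorable_induce_of_forall_isCompOf fun D hD => (hlink D hD).colorable_induce_two
  exact_mod_cast (colorable_add_of_induce_compl hS hA).chromaticNumber_le
end

section
/- Let G be a 2-connected graph with a proper 2-cutset {a, b} separating V(G)∖{a,b} into nonempty sets X and Y with no edges between them, and let P_Y be an induced path from a to b with interior in Y. Let G_X'' be the graph obtained from G|(X ∪ V(P_Y)) by reducing the flat path P_Y (deleting its interior and adding the edge ab), and define G_Y'' symmetrically. If both G_X'' and G_Y'' are k-colorable (k ≥ 2), then G is k-colorable. -/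
open SimpleGraph

/-- Gluing colorings along a proper 2-cutset: if the two blocks of decomposition (each with
the reduction edge `ab` added) are `k`-colorable (`k ≥ 2`), then so is `G`. -/
theorem colorable_of_proper_two_cutset {V : Type*} (G : SimpleGraph V)
    (hconn : G.Connected)
    (h2conn : ∀ v : V, (((⊤ : G.Subgraph).deleteVerts {v}).coe).Connected)
    (a b : V) (hab : a ≠ b) (hnadj : ¬ G.Adj a b)
    (X Y : Set V) (hX : X.Nonempty) (hY : Y.Nonempty) (hXY : Disjoint X Y)
    (haX : a ∉ X ∪ Y) (hbX : b ∉ X ∪ Y) (hcover : X ∪ Y ∪ {a, b} = Set.univ)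
    (hsep : ∀ x ∈ X, ∀ y ∈ Y, ¬ G.Adj x y)
    -- properness: neither block of `G` is just an induced path from `a` to `b`
    (hpropX : ¬ ∃ w : G.Walk a b, w.IsPath ∧ (∀ x, x ∈ w.support ↔ x ∈ X ∪ {a, b}) ∧
       ∀ x ∈ w.support, ∀ y ∈ w.support, G.Adj x y → s(x, y) ∈ w.edges)
    (hpropY : ¬ ∃ w : G.Walk a b, w.IsPath ∧ (∀ x, x ∈ w.support ↔ x ∈ Y ∪ {a, b}) ∧
       ∀ x ∈ w.support, ∀ y ∈ w.support, G.Adj x y → s(x, y) ∈ w.edges)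
    -- `P_Y`: an induced path from `a` to `b` with interior in `Y`
    (P : G.Walk a b) (hP : P.IsPath)
    (hPind : ∀ x ∈ P.support, ∀ y ∈ P.support, G.Adj x y → s(x, y) ∈ P.edges)
    (hPint : ∀ v ∈ P.support, v ≠ a → v ≠ b → v ∈ Y)
    (k : ℕ) (hk : 2 ≤ k)
    (hcX : ((G ⊔ SimpleGraph.fromEdgeSet {s(a, b)}).induce (X ∪ {a, b})).Colorable k)
    (hcY : ((G ⊔ SimpleGraph.fromEdgeSet {s(a, b)}).induce (Y ∪ {a, b})).Colorable k) :
    G.Colorable k := by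
  classical
  obtain ⟨cX⟩ := hcX
  obtain ⟨cY⟩ := hcY
  set G' := G ⊔ SimpleGraph.fromEdgeSet {s(a, b)} with hG'
  have hGsub : ∀ {u v : V}, G.Adj u v → G'.Adj u v := fun h => Or.inl h
  have hG'ab : G'.Adj a b := by
    refine Or.inr ?_
    simp [SimpleGraph.fromEdgeSet_adj, hab]
  have haXm : a ∈ X ∪ {a, b} := Or.inr (Or.inl rfl)
  have hbXm : b ∈ X ∪ {a, b} := Or.inr (Or.inr rfl)
  have haYm : a ∈ Y ∪ {a, b} := Or.inr (Or.inl rfl)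
  have hbYm : b ∈ Y ∪ {a, b} := Or.inr (Or.inr rfl)
  have hindX : ∀ {u v : V} (hu : u ∈ X ∪ {a, b}) (hv : v ∈ X ∪ {a, b}), G'.Adj u v →
      (G'.induce (X ∪ {a, b})).Adj ⟨u, hu⟩ ⟨v, hv⟩ := by
    intro u v hu hv h
    simpa using h
  have hindY : ∀ {u v : V} (hu : u ∈ Y ∪ {a, b}) (hv : v ∈ Y ∪ {a, b}), G'.Adj u v →
      (G'.induce (Y ∪ {a, b})).Adj ⟨u, hu⟩ ⟨v, hv⟩ := by
    intro u v hu hv h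
    simpa using h
  set xa := cX ⟨a, haXm⟩ with hxa
  set xb := cX ⟨b, hbXm⟩ with hxb
  set ya := cY ⟨a, haYm⟩ with hya
  set yb := cY ⟨b, hbYm⟩ with hyb
  have hxab : xa ≠ xb := cX.valid (hindX haXm hbXm hG'ab)
  have hyab : ya ≠ yb := cY.valid (hindY haYm hbYm hG'ab)
  set τ1 : Equiv.Perm (Fin k) := Equiv.swap ya xa with hτ1
  have hyb' : τ1 yb ≠ xa := by
    intro h
    have : τ1 yb = τ1 ya := by rw [h, hτ1, Equiv.swap_apply_left]
    exact hyab (τ1.injective this).symm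
  set σ : Equiv.Perm (Fin k) := τ1.trans (Equiv.swap (τ1 yb) xb) with hσ
  have hσa : σ ya = xa := by
    simp only [hσ, Equiv.trans_apply, hτ1, Equiv.swap_apply_left]
    exact Equiv.swap_apply_of_ne_of_ne (by simpa [hτ1, Equiv.swap_apply_left] using hyb'.symm) hxab
  have hσb : σ yb = xb := by
    simp only [hσ, Equiv.trans_apply, Equiv.swap_apply_left]
  -- a, b are not in X nor Y
  have haNX : a ∉ X := fun h => haX (Or.inl h)
  have haNY : a ∉ Y := fun h => haX (Or.inr h)
  have hbNX : b ∉ X := fun h => hbX (Or.inl h)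
  have hbNY : b ∉ Y := fun h => hbX (Or.inr h)
  have hmem : ∀ v : V, v ∉ X ∪ {a, b} → v ∈ Y ∪ {a, b} := by
    intro v hv
    have hv' : v ∈ X ∪ Y ∪ {a, b} := hcover ▸ Set.mem_univ v
    rcases hv' with (hvX | hvY) | hvab
    · exact absurd (Or.inl hvX) hv
    · exact Or.inl hvY
    · exact Or.inr hvab
  have hYnot : ∀ v ∈ Y, v ∉ X ∪ {a, b} := by
    intro v hv h
    rcases h with h | h | h
    · exact (hXY.ne_of_mem h hv) rfl
    · exact haNY (h ▸ hv)
    · exact hbNY (h ▸ hv)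
  set f : V → Fin k := fun v =>
    if h : v ∈ X ∪ {a, b} then cX ⟨v, h⟩ else σ (cY ⟨v, hmem v h⟩) with hf
  have hfX : ∀ (v : V) (h : v ∈ X ∪ {a, b}), f v = cX ⟨v, h⟩ := by
    intro v h; exact dif_pos h
  have hfY : ∀ (v : V) (h : v ∈ Y ∪ {a, b}), f v = σ (cY ⟨v, h⟩) := by
    intro v h
    rcases h with h | h | h
    · have hn := hYnot v h
      simp only [hf, dif_neg hn]
    · subst h
      rw [hfX v haXm]
      exact hσa.symm
    · subst h
      rw [hfX v hbXm]
      exact hσb.symm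
  refine ⟨SimpleGraph.Coloring.mk f ?_⟩
  intro u v huv
  by_cases hu : u ∈ X ∪ {a, b} <;> by_cases hv : v ∈ X ∪ {a, b}
  · rw [hfX u hu, hfX v hv]
    exact cX.valid (hindX hu hv (hGsub huv))
  · -- v ∈ Y
    have hvY : v ∈ Y := by
      rcases hmem v hv with h | h
      · exact h
      · exact absurd (Or.inr h) hv
    rcases hu with huX | huab
    · exact absurd huv (hsep u huX v hvY)
    · have hu' : u ∈ Y ∪ {a, b} := Or.inr huab
      rw [hfY u hu', hfY v (Or.inl hvY)]
      intro h
      exact cY.valid (hindY hu' (Or.inl hvY) (hGsub huv)) (σ.injective h)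
  · have huY : u ∈ Y := by
      rcases hmem u hu with h | h
      · exact h
      · exact absurd (Or.inr h) hu
    rcases hv with hvX | hvab
    · exact absurd huv.symm (hsep v hvX u huY)
    · have hv' : v ∈ Y ∪ {a, b} := Or.inr hvab
      rw [hfY u (Or.inl huY), hfY v hv']
      intro h
      exact cY.valid (hindY (Or.inl huY) hv' (hGsub huv)) (σ.injective h)
  · rw [hfY u (hmem u hu), hfY v (hmem v hv)]
    intro h
    exact cY.valid (hindY (hmem u hu) (hmem v hv) (hGsub huv)) (σ.injective h)
end
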